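/- arXiv:1708.07308 — 3 statements merged into one kernel-verified Lean document; each statement's English description precedes it below -/
import Mathlib

section
/- Let T ≥ 1, σ > 0, β* > 0, and let (c_t)_{t=1}^T, (r_t)_{t=1}^T, (β_t)_{t=1}^T, (s_t)_{t=1}^T be real sequences with c_t > 0, r_t ≥ 0, 0 < β_t ≤ β*, and 0 ≤ s_t ≤ 1 for all t. If r_t ≤ 2 √(β_t / c_t) · s_t for every t, then ∑_{t=1}^{T} c_t r_t² ≤ (4 β* / log(1 + σ^{-2})) · ∑_{t=1}^{T} log(1 + σ^{-2} s_t²). -/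
/-!
Squaring the confidence bound gives `c_t r_t² ≤ 4 β* s_t²` term by term, and concavity of `log`
on `[1, 1 + σ⁻²]` gives `s² log (1 + σ⁻²) ≤ log (1 + σ⁻² s²)` for `s² ∈ [0, 1]`.
-/

open Real Finset

theorem mul_log_one_add_le_log_one_add_mul {a θ : ℝ} (ha : -1 < a) (hθ₀ : 0 ≤ θ) (hθ₁ : θ ≤ 1) :
    θ * log (1 + a) ≤ log (1 + a * θ) := by
  have hconc := strictConcaveOn_log_Ioi.concaveOn.2 (x := 1 + a) (y := 1)
    (Set.mem_Ioi.2 (by linarith)) (Set.mem_Ioi.2 one_pos) hθ₀ (sub_nonneg.2 hθ₁)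
    (add_sub_cancel θ 1)
  simp only [smul_eq_mul, log_one, mul_zero, add_zero] at hconc
  rwa [show θ * (1 + a) + (1 - θ) * 1 = 1 + a * θ by ring] at hconc

theorem mul_sq_le_of_le_two_mul_sqrt_div_mul {c β r s : ℝ} (hc : 0 < c) (hβ : 0 ≤ β)
    (hr : 0 ≤ r) (h : r ≤ 2 * √(β / c) * s) :
    c * r ^ 2 ≤ 4 * β * s ^ 2 := by
  have hsq : r ^ 2 ≤ 4 * (β / c) * s ^ 2 := by
    calc r ^ 2 ≤ (2 * √(β / c) * s) ^ 2 := pow_le_pow_left₀ hr h 2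
      _ = 4 * (β / c) * s ^ 2 := by rw [mul_pow, mul_pow, sq_sqrt (by positivity)]; ring
  calc c * r ^ 2 ≤ c * (4 * (β / c) * s ^ 2) := mul_le_mul_of_nonneg_left hsq hc.le
    _ = 4 * β * s ^ 2 := by field_simp

theorem weighted_squared_regret_bound_general (T : ℕ) (σ βstar : ℝ)
    (hσ : 0 < σ)
    (c r β s : ℕ → ℝ)
    (hc : ∀ t ∈ Finset.Icc 1 T, 0 < c t)
    (hr : ∀ t ∈ Finset.Icc 1 T, 0 ≤ r t)
    (hβ : ∀ t ∈ Finset.Icc 1 T, 0 < β t ∧ β t ≤ βstar)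
    (hs : ∀ t ∈ Finset.Icc 1 T, 0 ≤ s t ∧ s t ≤ 1)
    (hrb : ∀ t ∈ Finset.Icc 1 T, r t ≤ 2 * Real.sqrt (β t / c t) * s t) :
    ∑ t ∈ Finset.Icc 1 T, c t * (r t) ^ 2 ≤
      (4 * βstar / Real.log (1 + (σ ^ 2)⁻¹)) *
        ∑ t ∈ Finset.Icc 1 T, Real.log (1 + (σ ^ 2)⁻¹ * (s t) ^ 2) := by
  set a := (σ ^ 2)⁻¹
  have ha : 0 < a := by positivity
  have hlog : 0 < log (1 + a) := log_pos (by linarith)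
  rw [mul_sum]
  refine sum_le_sum fun t ht => ?_
  obtain ⟨hβ₀, hβ_le⟩ := hβ t ht
  obtain ⟨hs₀, hs₁⟩ := hs t ht
  have hs_sq : s t ^ 2 * log (1 + a) ≤ log (1 + a * s t ^ 2) :=
    mul_log_one_add_le_log_one_add_mul (by linarith) (sq_nonneg _) (pow_le_one₀ hs₀ hs₁)
  calc c t * r t ^ 2 ≤ 4 * β t * s t ^ 2 :=
        mul_sq_le_of_le_two_mul_sqrt_div_mul (hc t ht) hβ₀.le (hr t ht) (hrb t ht)
    _ ≤ 4 * βstar * s t ^ 2 := by gcongr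
    _ ≤ 4 * βstar * (log (1 + a * s t ^ 2) / log (1 + a)) :=
        mul_le_mul_of_nonneg_left ((le_div_iff₀ hlog).2 hs_sq) (by linarith)
    _ = 4 * βstar / log (1 + a) * log (1 + a * s t ^ 2) := by ring

theorem weighted_squared_regret_bound (T : ℕ) (hT : 1 ≤ T) (σ βstar : ℝ)
    (hσ : 0 < σ) (hβstar : 0 < βstar)
    (c r β s : ℕ → ℝ)
    (hc : ∀ t ∈ Finset.Icc 1 T, 0 < c t)
    (hr : ∀ t ∈ Finset.Icc 1 T, 0 ≤ r t)
    (hβ : ∀ t ∈ Finset.Icc 1 T, 0 < β t ∧ β t ≤ βstar)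
    (hs : ∀ t ∈ Finset.Icc 1 T, 0 ≤ s t ∧ s t ≤ 1)
    (hrb : ∀ t ∈ Finset.Icc 1 T, r t ≤ 2 * Real.sqrt (β t / c t) * s t) :
    ∑ t ∈ Finset.Icc 1 T, c t * (r t) ^ 2 ≤
      (4 * βstar / Real.log (1 + (σ ^ 2)⁻¹)) *
        ∑ t ∈ Finset.Icc 1 T, Real.log (1 + (σ ^ 2)⁻¹ * (s t) ^ 2) :=
  weighted_squared_regret_bound_general T σ βstar hσ c r β s hc hr hβ hs hrb
end

section
/- Let T ≥ 1, K ≥ 1, σ > 0, c* > 0, let f : {1,…,K} → ℝ, let c : {1,…,K} → ℝ with 0 < c_k ≤ c* for all k, and let (β_t)_{t=1}^T be a nondecreasing sequence of positive reals. For each round t let μ_{t-1}, s_{t-1} : {1,…,K} → ℝ with 0 ≤ s_{t-1}(k) ≤ 1 for all k, assume the confidence bounds |f(k) − μ_{t-1}(k)| ≤ √(β_t/c_k) · s_{t-1}(k) hold for all t ∈ {1,…,T} and all k, and let a_t be an arm maximizing k ↦ μ_{t-1}(k) + √(β_t/c_k) · s_{t-1}(k). Let a* be an arm maximizing f. Then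 the cost-weighted cumulative regret satisfies ∑_{t=1}^{T} c_{a_t} (f(a*) − f(a_t)) ≤ √(T · I(T)), where I(T) = (4 c* β_T / log(1 + σ^{-2})) · ∑_{t=1}^{T} log(1 + σ^{-2} s_{t-1}(a_t)²). -/
/-!
In round `t` the confidence bounds at `a*` and at `a_t`, together with the choice of `a_t`,
give the usual UCB bound `f(a*) - f(a_t) ≤ 2 √(β_t / c_{a_t}) s_{t-1}(a_t)`; multiplying by
the cost turns the width into `2 √(c_{a_t} β_t) s_{t-1}(a_t) ≤ 2 √(c* β_T) s_{t-1}(a_t)`.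
Concavity of `log` gives `s² ≤ log (1 + σ⁻² s²) / log (1 + σ⁻²)` for `s ∈ [0, 1]`, and
Cauchy–Schwarz over the `T` rounds finishes the proof.
-/

open Real Finset

theorem sub_le_two_mul_of_ucb {ι : Type*} {f μ w : ι → ℝ} {i j : ι}
    (hi : |f i - μ i| ≤ w i) (hj : |f j - μ j| ≤ w j) (hsel : μ i + w i ≤ μ j + w j) :
    f i - f j ≤ 2 * w j := by
  linarith [(abs_le.mp hi).2, (abs_le.mp hj).1]

theorem Real.mul_sqrt_div_self {c : ℝ} (hc : 0 ≤ c) (β : ℝ) : c * √(β / c) = √(c * β) := by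
  rcases hc.eq_or_lt with rfl | hc
  · simp
  rw [← Real.sqrt_sq hc.le, ← Real.sqrt_mul (sq_nonneg c), Real.sqrt_sq hc.le]
  congr 1
  field_simp

theorem Real.mul_log_one_add_le_log_one_add_mul {A x : ℝ} (hA : -1 < A) (hx₀ : 0 ≤ x)
    (hx₁ : x ≤ 1) : x * log (1 + A) ≤ log (1 + x * A) := by
  have hpos : 0 < 1 + A := by linarith
  rw [← Real.log_rpow hpos]
  exact Real.log_le_log (Real.rpow_pos_of_pos hpos x)
    (rpow_one_add_le_one_add_mul_self hA.le hx₀ hx₁)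

theorem Finset.sum_le_sqrt_card_mul_sum_sq {ι : Type*} (s : Finset ι) (g : ι → ℝ) :
    ∑ i ∈ s, g i ≤ √(#s * ∑ i ∈ s, g i ^ 2) :=
  Real.le_sqrt_of_sq_le (sq_sum_le_card_mul_sum_sq)

theorem cost_mul_ucb_regret_le {ι : Type*} {f μ s c : ι → ℝ} {β βmax cmax : ℝ} {i j : ι}
    (hβ : 0 ≤ β) (hβmax : β ≤ βmax) (hcj : 0 < c j) (hcmax : c j ≤ cmax) (hsj : 0 ≤ s j)
    (hi : |f i - μ i| ≤ √(β / c i) * s i) (hj : |f j - μ j| ≤ √(β / c j) * s j)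
    (hsel : μ i + √(β / c i) * s i ≤ μ j + √(β / c j) * s j) :
    c j * (f i - f j) ≤ 2 * √(cmax * βmax) * s j := by
  have hwidth : √(c j * β) ≤ √(cmax * βmax) :=
    Real.sqrt_le_sqrt (mul_le_mul hcmax hβmax hβ (hcj.le.trans hcmax))
  calc c j * (f i - f j) ≤ c j * (2 * (√(β / c j) * s j)) :=
        mul_le_mul_of_nonneg_left
          (sub_le_two_mul_of_ucb (w := fun k => √(β / c k) * s k) hi hj hsel) hcj.le
    _ = 2 * (c j * √(β / c j)) * s j := by ring
    _ = 2 * √(c j * β) * s j := by rw [Real.mul_sqrt_div_self hcj.le]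
    _ ≤ 2 * √(cmax * βmax) * s j := by gcongr

theorem Real.le_log_one_add_mul_div_log_one_add {A x : ℝ} (hA : 0 < A) (hx₀ : 0 ≤ x)
    (hx₁ : x ≤ 1) : x ≤ log (1 + A * x) / log (1 + A) := by
  rw [le_div_iff₀ (Real.log_pos (by linarith)), mul_comm A]
  exact Real.mul_log_one_add_le_log_one_add_mul (by linarith) hx₀ hx₁

theorem sq_two_mul_sqrt_mul_le_div_log_mul_log {C A x : ℝ} (hC : 0 ≤ C) (hA : 0 < A)
    (hx₀ : 0 ≤ x) (hx₁ : x ≤ 1) :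
    (2 * √C * x) ^ 2 ≤ 4 * C / log (1 + A) * log (1 + A * x ^ 2) :=
  calc (2 * √C * x) ^ 2 = 4 * C * x ^ 2 := by
        rw [mul_pow, mul_pow, Real.sq_sqrt hC]
        norm_num
    _ ≤ 4 * C * (log (1 + A * x ^ 2) / log (1 + A)) := by
        gcongr
        exact Real.le_log_one_add_mul_div_log_one_add hA (sq_nonneg x) (pow_le_one₀ hx₀ hx₁)
    _ = 4 * C / log (1 + A) * log (1 + A * x ^ 2) := by ring

theorem cost_aware_gpucb_cumulative_regret_general (T K : ℕ)
    (σ cstar : ℝ) (hσ : 0 < σ)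
    (f c : Fin K → ℝ) (hc : ∀ k, 0 < c k ∧ c k ≤ cstar)
    (β : ℕ → ℝ) (hβpos : ∀ t ∈ Finset.Icc 1 T, 0 < β t) (hβmono : Monotone β)
    (μ s : ℕ → Fin K → ℝ)
    (hs : ∀ t ∈ Finset.Icc 1 T, ∀ k, 0 ≤ s t k ∧ s t k ≤ 1)
    (hconf : ∀ t ∈ Finset.Icc 1 T, ∀ k,
      |f k - μ t k| ≤ Real.sqrt (β t / c k) * s t k)
    (a : ℕ → Fin K)
    (ha : ∀ t ∈ Finset.Icc 1 T, ∀ k,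
      μ t k + Real.sqrt (β t / c k) * s t k ≤
        μ t (a t) + Real.sqrt (β t / c (a t)) * s t (a t))
    (astar : Fin K) :
    ∑ t ∈ Finset.Icc 1 T, c (a t) * (f astar - f (a t)) ≤
      Real.sqrt (T * ((4 * cstar * β T / Real.log (1 + (σ ^ 2)⁻¹)) *
        ∑ t ∈ Finset.Icc 1 T, Real.log (1 + (σ ^ 2)⁻¹ * (s t (a t)) ^ 2))) := by
  set width : ℕ → ℝ := fun t => 2 * √(cstar * β T) * s t (a t)
  have hround : ∀ t ∈ Icc 1 T, c (a t) * (f astar - f (a t)) ≤ width t := fun t ht =>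
    cost_mul_ucb_regret_le (hβpos t ht).le (hβmono (mem_Icc.mp ht).2) (hc (a t)).1 (hc (a t)).2
      (hs t ht (a t)).1 (hconf t ht astar) (hconf t ht (a t)) (ha t ht astar)
  have hwidth_sq : ∀ t ∈ Icc 1 T, width t ^ 2 ≤ 4 * cstar * β T / log (1 + (σ ^ 2)⁻¹) *
      log (1 + (σ ^ 2)⁻¹ * s t (a t) ^ 2) := fun t ht => by
    have hβT : 0 < β T := (hβpos t ht).trans_le (hβmono (mem_Icc.mp ht).2)
    have hcstar : 0 < cstar := (hc (a t)).1.trans_le (hc (a t)).2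
    rw [mul_assoc 4]
    exact sq_two_mul_sqrt_mul_le_div_log_mul_log (mul_pos hcstar hβT).le (by positivity)
      (hs t ht (a t)).1 (hs t ht (a t)).2
  calc ∑ t ∈ Icc 1 T, c (a t) * (f astar - f (a t)) ≤ ∑ t ∈ Icc 1 T, width t :=
        sum_le_sum hround
    _ ≤ √(#(Icc 1 T) * ∑ t ∈ Icc 1 T, width t ^ 2) := sum_le_sqrt_card_mul_sum_sq _ _
    _ ≤ _ := by
      rw [Nat.card_Icc, add_tsub_cancel_right]
      gcongr
      rw [mul_sum]
      exact sum_le_sum hwidth_sq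

theorem cost_aware_gpucb_cumulative_regret (T K : ℕ) (hT : 1 ≤ T) (hK : 1 ≤ K)
    (σ cstar : ℝ) (hσ : 0 < σ) (hcstar : 0 < cstar)
    (f c : Fin K → ℝ) (hc : ∀ k, 0 < c k ∧ c k ≤ cstar)
    (β : ℕ → ℝ) (hβpos : ∀ t ∈ Finset.Icc 1 T, 0 < β t) (hβmono : Monotone β)
    (μ s : ℕ → Fin K → ℝ)
    (hs : ∀ t ∈ Finset.Icc 1 T, ∀ k, 0 ≤ s t k ∧ s t k ≤ 1)
    (hconf : ∀ t ∈ Finset.Icc 1 T, ∀ k,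
      |f k - μ t k| ≤ Real.sqrt (β t / c k) * s t k)
    (a : ℕ → Fin K)
    (ha : ∀ t ∈ Finset.Icc 1 T, ∀ k,
      μ t k + Real.sqrt (β t / c k) * s t k ≤
        μ t (a t) + Real.sqrt (β t / c (a t)) * s t (a t))
    (astar : Fin K) (hastar : ∀ k, f k ≤ f astar) :
    ∑ t ∈ Finset.Icc 1 T, c (a t) * (f astar - f (a t)) ≤
      Real.sqrt (T * ((4 * cstar * β T / Real.log (1 + (σ ^ 2)⁻¹)) *
        ∑ t ∈ Finset.Icc 1 T, Real.log (1 + (σ ^ 2)⁻¹ * (s t (a t)) ^ 2))) :=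
  cost_aware_gpucb_cumulative_regret_general T K σ cstar hσ f c hc β hβpos hβmono μ s hs hconf a ha
    astar
end

section
/- Let n ≥ 1, T ≥ 1 be natural numbers and let c* > 0, β* > 0, σ* > 0 be real constants. For each round t ∈ {1,…,T} let c_t ∈ (0, c*], β_t ∈ (0, β*], s_t ∈ [0,1], and let ρ_1(t), …, ρ_n(t) be nonnegative reals satisfying ∑_{i=1}^{n} ρ_i(t) ≤ n · 2 √(β_t / c_t) · s_t. Let T(1), …, T(n) be pairwise disjoint subsets of {1,…,T} with union {1,…,T}, and for each i let σ^i ∈ (0, σ*]. Then ∑_{t=1}^{T} c_t ∑_{i=1}^{n} ρ_i(t) ≤ n √T · √( ∑_{i=1}^{n} I_i ), where I_i = (4 c* β* / log(1 + (σ*)^{-2})) · ∑_{t ∈ T(i)} log(1 + (σ^i)^{-2} s_t²). -/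
/-!
Each round's cost-weighted regret is at most `n · 2√(c* β*) · s_t`, because `c_t √(β_t / c_t) = √(c_t β_t)`.
Cauchy–Schwarz bounds `∑_t s_t` by `√T · √(∑_t s_t²)`. Since `s_t² ≤ 1`, concavity of `log` gives
`s_t² · log (1 + σ*⁻²) ≤ log (1 + (σ^i)⁻² s_t²)`, and splitting the rounds according to the served user
bounds `∑_t s_t²` by the users' information gains divided by `log (1 + σ*⁻²)`.
-/

open Real Finset

namespace Real

theorem mul_log_one_add_le_log_one_add_mul_s15 {x a : ℝ} (hx₀ : 0 ≤ x) (hx₁ : x ≤ 1) (ha : -1 < a) :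
    x * log (1 + a) ≤ log (1 + a * x) := by
  have hconc := strictConcaveOn_log_Ioi.concaveOn.2 (Set.mem_Ioi.2 one_pos)
    (Set.mem_Ioi.2 (by linarith : (0 : ℝ) < 1 + a)) (sub_nonneg.2 hx₁) hx₀ (sub_add_cancel 1 x)
  simp only [smul_eq_mul, log_one, mul_zero, zero_add, mul_one] at hconc
  rwa [show 1 - x + x * (1 + a) = 1 + a * x by ring] at hconc

theorem sq_mul_log_one_add_inv_sq_le {σ σ' s : ℝ} (hσ : 0 < σ) (hσσ' : σ ≤ σ') (hs₀ : 0 ≤ s)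
    (hs₁ : s ≤ 1) : s ^ 2 * log (1 + (σ' ^ 2)⁻¹) ≤ log (1 + (σ ^ 2)⁻¹ * s ^ 2) :=
  calc s ^ 2 * log (1 + (σ' ^ 2)⁻¹) ≤ s ^ 2 * log (1 + (σ ^ 2)⁻¹) := by gcongr
    _ ≤ log (1 + (σ ^ 2)⁻¹ * s ^ 2) :=
      mul_log_one_add_le_log_one_add_mul_s15 (sq_nonneg s) (pow_le_one₀ hs₀ hs₁)
        (by linarith [inv_nonneg.2 (sq_nonneg σ)])

theorem mul_sqrt_div_self_s15 {c : ℝ} (hc : 0 ≤ c) (β : ℝ) : c * √(β / c) = √(c * β) := by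
  rw [← sqrt_sq hc, ← sqrt_mul (sq_nonneg c), sqrt_sq hc]
  rcases hc.eq_or_lt with rfl | hc
  · simp
  · field_simp

theorem mul_sqrt_div_le_sqrt_mul {c c' β β' : ℝ} (hc₀ : 0 ≤ c) (hc : c ≤ c') (hβ₀ : 0 ≤ β)
    (hβ : β ≤ β') : c * √(β / c) ≤ √(c' * β') := by
  rw [mul_sqrt_div_self_s15 hc₀]
  gcongr
  exact hc₀.trans hc

theorem sum_le_sqrt_card_mul_sqrt_sum_sq {ι : Type*} (s : Finset ι) (f : ι → ℝ) :
    ∑ i ∈ s, f i ≤ √(#s) * √(∑ i ∈ s, f i ^ 2) := by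
  simpa using sum_mul_le_sqrt_mul_sqrt s (fun _ ↦ 1) f

theorem two_mul_sqrt_mul_sqrt_le {a L Q S : ℝ} (ha : 0 ≤ a) (hL : 0 < L) (hQ : 0 ≤ Q)
    (hLQ : L * Q ≤ S) : 2 * √a * √Q ≤ √(4 * a / L * S) := by
  have hS : 0 ≤ S := (mul_nonneg hL.le hQ).trans hLQ
  rw [le_sqrt (by positivity) (by positivity), mul_pow, mul_pow, sq_sqrt ha, sq_sqrt hQ]
  calc 2 ^ 2 * a * Q = 4 * a / L * (L * Q) := by field_simp; ring
    _ ≤ 4 * a / L * S := by gcongr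

end Real

theorem cost_mul_le_of_le_mul_sqrt_div {n c c' β β' s R : ℝ} (hn : 0 ≤ n) (hc₀ : 0 ≤ c)
    (hc : c ≤ c') (hβ₀ : 0 ≤ β) (hβ : β ≤ β') (hs : 0 ≤ s) (hR : R ≤ n * (2 * √(β / c)) * s) :
    c * R ≤ n * (2 * √(c' * β')) * s :=
  calc c * R ≤ c * (n * (2 * √(β / c)) * s) := by gcongr
    _ = n * 2 * s * (c * √(β / c)) := by ring
    _ ≤ n * 2 * s * √(c' * β') := by gcongr; exact mul_sqrt_div_le_sqrt_mul hc₀ hc hβ₀ hβ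
    _ = n * (2 * √(c' * β')) * s := by ring

theorem log_one_add_inv_sq_mul_sum_sq_le {ι κ : Type*} [DecidableEq κ] (I : Finset ι)
    (Ts : ι → Finset κ) (hdisj : (I : Set ι).PairwiseDisjoint Ts) {σ : ι → ℝ} {σ' : ℝ}
    (hσ : ∀ i ∈ I, 0 < σ i ∧ σ i ≤ σ') {s : κ → ℝ} (hs : ∀ i ∈ I, ∀ t ∈ Ts i, 0 ≤ s t ∧ s t ≤ 1) :
    log (1 + (σ' ^ 2)⁻¹) * ∑ t ∈ I.biUnion Ts, s t ^ 2 ≤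
      ∑ i ∈ I, ∑ t ∈ Ts i, log (1 + (σ i ^ 2)⁻¹ * s t ^ 2) := by
  rw [sum_biUnion hdisj, mul_sum]
  refine sum_le_sum fun i hi ↦ ?_
  rw [mul_sum]
  refine sum_le_sum fun t ht ↦ ?_
  rw [mul_comm]
  exact sq_mul_log_one_add_inv_sq_le (hσ i hi).1 (hσ i hi).2 (hs i hi t ht).1 (hs i hi t ht).2

theorem greedy_multitenant_regret_general (n T : ℕ)
    (cstar βstar σstar : ℝ)
    (hcstar : 0 < cstar) (hβstar : 0 < βstar) (hσstar : 0 < σstar)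
    (c β s : ℕ → ℝ)
    (hc : ∀ t ∈ Finset.Icc 1 T, 0 < c t ∧ c t ≤ cstar)
    (hβ : ∀ t ∈ Finset.Icc 1 T, 0 < β t ∧ β t ≤ βstar)
    (hs : ∀ t ∈ Finset.Icc 1 T, 0 ≤ s t ∧ s t ≤ 1)
    (ρ : Fin n → ℕ → ℝ)
    (hsum : ∀ t ∈ Finset.Icc 1 T,
      ∑ i, ρ i t ≤ n * (2 * Real.sqrt (β t / c t)) * s t)
    (Ts : Fin n → Finset ℕ)
    (hsub : ∀ i, Ts i ⊆ Finset.Icc 1 T)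
    (hdisj : ∀ i j, i ≠ j → Disjoint (Ts i) (Ts j))
    (hunion : Finset.univ.biUnion Ts = Finset.Icc 1 T)
    (σi : Fin n → ℝ) (hσi : ∀ i, 0 < σi i ∧ σi i ≤ σstar) :
    ∑ t ∈ Finset.Icc 1 T, c t * ∑ i, ρ i t ≤
      n * Real.sqrt T * Real.sqrt (∑ i,
        (4 * cstar * βstar / Real.log (1 + (σstar ^ 2)⁻¹)) *
          ∑ t ∈ Ts i, Real.log (1 + ((σi i) ^ 2)⁻¹ * (s t) ^ 2)) := by
  have hinfo := log_one_add_inv_sq_mul_sum_sq_le univ Ts (fun i _ j _ hij ↦ hdisj i j hij)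
    (fun i _ ↦ hσi i) (s := s) fun i _ t ht ↦ hs t (hsub i ht)
  rw [hunion] at hinfo
  rw [← mul_sum]
  calc ∑ t ∈ Icc 1 T, c t * ∑ i, ρ i t
      ≤ n * (2 * √(cstar * βstar)) * ∑ t ∈ Icc 1 T, s t := by
        rw [mul_sum]
        exact sum_le_sum fun t ht ↦ cost_mul_le_of_le_mul_sqrt_div n.cast_nonneg (hc t ht).1.le
          (hc t ht).2 (hβ t ht).1.le (hβ t ht).2 (hs t ht).1 (hsum t ht)
    _ ≤ n * (2 * √(cstar * βstar)) * (√T * √(∑ t ∈ Icc 1 T, s t ^ 2)) := by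
        gcongr
        simpa using sum_le_sqrt_card_mul_sqrt_sum_sq (Icc 1 T) s
    _ = n * √T * (2 * √(cstar * βstar) * √(∑ t ∈ Icc 1 T, s t ^ 2)) := by ring
    _ ≤ _ := by
        gcongr
        rw [mul_assoc 4]
        exact two_mul_sqrt_mul_sqrt_le (by positivity)
          (log_pos (lt_add_of_pos_right 1 (by positivity))) (sum_nonneg fun t _ ↦ sq_nonneg (s t))
          hinfo

theorem greedy_multitenant_regret (n T : ℕ) (hn : 1 ≤ n) (hT : 1 ≤ T)
    (cstar βstar σstar : ℝ)
    (hcstar : 0 < cstar) (hβstar : 0 < βstar) (hσstar : 0 < σstar)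
    (c β s : ℕ → ℝ)
    (hc : ∀ t ∈ Finset.Icc 1 T, 0 < c t ∧ c t ≤ cstar)
    (hβ : ∀ t ∈ Finset.Icc 1 T, 0 < β t ∧ β t ≤ βstar)
    (hs : ∀ t ∈ Finset.Icc 1 T, 0 ≤ s t ∧ s t ≤ 1)
    (ρ : Fin n → ℕ → ℝ)
    (hρ : ∀ i, ∀ t ∈ Finset.Icc 1 T, 0 ≤ ρ i t)
    (hsum : ∀ t ∈ Finset.Icc 1 T,
      ∑ i, ρ i t ≤ n * (2 * Real.sqrt (β t / c t)) * s t)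
    (Ts : Fin n → Finset ℕ)
    (hsub : ∀ i, Ts i ⊆ Finset.Icc 1 T)
    (hdisj : ∀ i j, i ≠ j → Disjoint (Ts i) (Ts j))
    (hunion : Finset.univ.biUnion Ts = Finset.Icc 1 T)
    (σi : Fin n → ℝ) (hσi : ∀ i, 0 < σi i ∧ σi i ≤ σstar) :
    ∑ t ∈ Finset.Icc 1 T, c t * ∑ i, ρ i t ≤
      n * Real.sqrt T * Real.sqrt (∑ i,
        (4 * cstar * βstar / Real.log (1 + (σstar ^ 2)⁻¹)) *
          ∑ t ∈ Ts i, Real.log (1 + ((σi i) ^ 2)⁻¹ * (s t) ^ 2)) :=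
  greedy_multitenant_regret_general n T cstar βstar σstar hcstar hβstar hσstar c β s hc hβ hs ρ hsum
    Ts hsub hdisj hunion σi hσi
end
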